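/- arXiv:1903.12445 — 3 statements merged into one kernel-verified Lean document; each statement's English description precedes it below -/
import Mathlib

section
/- Let s > 1 be a real number. Then for every integer n ≥ 2 and every integer k ≥ 1, the number H_k(n) of ordered factorizations of n into exactly k factors satisfies H_k(n) ≤ (ζ(s) − 1)^{k-1} · n^s / 2^s. -/
/-!
Splitting off the first factor `d` of an ordered factorization gives
`H_{k+1}(n) ≤ ∑_{d ∣ n, d ≥ 2} H_k(n / d)`. Inducting on `k` from the trivial bound
`H_1(n) ≤ (n / 2)^s`, each step multiplies the bound by `∑_{d ∣ n, d ≥ 2} d^{-s}`,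
which is at most `ζ(s) - 1`. The bound holds for every `n`, not just `n ≥ 2`, which keeps
the induction free of the case `n / d = 1`.
-/

/-- `Hkfac k n` is the number of ordered factorizations of `n` into exactly `k` factors,
each factor being at least `2`. -/
noncomputable def Hkfac (k n : ℕ) : ℕ :=
  Nat.card {l : List ℕ // l.length = k ∧ (∀ d ∈ l, 2 ≤ d) ∧ l.prod = n}

def orderedFactorizations (k n : ℕ) : Set (List ℕ) :=
  {l | l.length = k ∧ (∀ d ∈ l, 2 ≤ d) ∧ l.prod = n}

theorem Hkfac_eq_ncard (k n : ℕ) : Hkfac k n = (orderedFactorizations k n).ncard :=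
  Nat.card_coe_set_eq _

theorem orderedFactorizations_zero_subset (n : ℕ) : orderedFactorizations 0 n ⊆ {[]} := by
  rintro l ⟨hl, -⟩
  exact List.length_eq_zero_iff.mp hl

theorem orderedFactorizations_one_subset (n : ℕ) : orderedFactorizations 1 n ⊆ {[n]} := by
  rintro l ⟨hl, -, hprod⟩
  obtain ⟨a, rfl⟩ := List.length_eq_one_iff.mp hl
  simp_all

theorem orderedFactorizations_one_eq_empty {n : ℕ} (hn : n < 2) :
    orderedFactorizations 1 n = ∅ := by
  refine Set.eq_empty_of_forall_notMem fun l hl => ?_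
  obtain rfl : l = [n] := orderedFactorizations_one_subset n hl
  have := hl.2.1 n (List.mem_singleton_self n)
  omega

theorem orderedFactorizations_succ_subset (k n : ℕ) :
    orderedFactorizations (k + 1) n ⊆
      ⋃ d ∈ {d ∈ n.divisors | 2 ≤ d}, List.cons d '' orderedFactorizations k (n / d) := by
  rintro (_ | ⟨d, t⟩) ⟨hl, h2, hprod⟩
  · simp at hl
  rw [List.forall_mem_cons] at h2
  rw [List.prod_cons] at hprod
  have ht : t.prod ≠ 0 := List.prod_ne_zero fun h0 => by have := h2.2 0 h0; omega
  have hd : 0 < d := by omega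
  simp only [Set.mem_iUnion, Set.mem_image]
  refine ⟨d, ?_, t, ⟨by simpa using hl, h2.2, ?_⟩, rfl⟩
  · simp only [Finset.mem_filter, Nat.mem_divisors]
    exact ⟨⟨Dvd.intro _ hprod, hprod ▸ mul_ne_zero hd.ne' ht⟩, h2.1⟩
  · rw [← hprod, Nat.mul_div_cancel_left _ hd]

theorem orderedFactorizations_finite (k n : ℕ) : (orderedFactorizations k n).Finite := by
  induction k generalizing n with
  | zero => exact (Set.finite_singleton []).subset (orderedFactorizations_zero_subset n)
  | succ k ih =>
    refine Set.Finite.subset ?_ (orderedFactorizations_succ_subset k n)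
    exact Set.Finite.biUnion (Finset.finite_toSet _) fun d _ => (ih _).image _

theorem Hkfac_succ_le_sum (k n : ℕ) :
    Hkfac (k + 1) n ≤ ∑ d ∈ n.divisors with 2 ≤ d, Hkfac k (n / d) := by
  rw [Hkfac_eq_ncard]
  calc _ ≤ _ := Set.ncard_le_ncard (orderedFactorizations_succ_subset k n)
        ((Finset.finite_toSet _).biUnion fun d _ => (orderedFactorizations_finite k _).image _)
    _ ≤ _ := Finset.set_ncard_biUnion_le _ _
    _ = _ := by
      refine Finset.sum_congr rfl fun d _ => ?_
      rw [Set.ncard_image_of_injective _ List.cons_injective, Hkfac_eq_ncard]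

theorem Hkfac_one_le {s : ℝ} (hs : 0 ≤ s) (n : ℕ) :
    (Hkfac 1 n : ℝ) ≤ (n : ℝ) ^ s / 2 ^ s := by
  rcases lt_or_ge n 2 with hn | hn
  · rw [Hkfac_eq_ncard, orderedFactorizations_one_eq_empty hn, Set.ncard_empty, Nat.cast_zero]
    positivity
  · have : Hkfac 1 n ≤ 1 := by
      rw [Hkfac_eq_ncard]
      exact (Set.ncard_le_ncard (orderedFactorizations_one_subset n)).trans_eq
        (Set.ncard_singleton _)
    calc (Hkfac 1 n : ℝ) ≤ 1 := by exact_mod_cast this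
      _ ≤ (n : ℝ) ^ s / 2 ^ s := by
          rw [← Real.div_rpow (Nat.cast_nonneg n) zero_le_two]
          exact Real.one_le_rpow (by rw [le_div_iff₀ two_pos]; exact_mod_cast (by omega)) hs

theorem sum_rpow_neg_le_tsum_sub_one {s : ℝ} (hs : 1 < s) {F : Finset ℕ} (hF : 1 ∉ F) :
    ∑ d ∈ F, (d : ℝ) ^ (-s) ≤ (∑' m : ℕ, (m : ℝ) ^ (-s)) - 1 := by
  have hsum := Real.summable_nat_rpow.mpr (neg_lt_neg hs)
  have := hsum.sum_le_tsum (insert 1 F) fun m _ => Real.rpow_nonneg m.cast_nonneg _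
  rw [Finset.sum_insert hF, Nat.cast_one, Real.one_rpow] at this
  linarith

theorem Hkfac_succ_le {s : ℝ} (hs : 1 < s) (k n : ℕ) :
    (Hkfac (k + 1) n : ℝ) ≤ ((∑' m : ℕ, (m : ℝ) ^ (-s)) - 1) ^ k * (n : ℝ) ^ s / 2 ^ s := by
  set C := (∑' m : ℕ, (m : ℝ) ^ (-s)) - 1
  have hC : 0 ≤ C := by
    simpa only [Finset.sum_empty] using sum_rpow_neg_le_tsum_sub_one hs (Finset.notMem_empty 1)
  induction k generalizing n with
  | zero => simpa using Hkfac_one_le (by linarith) n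
  | succ k ih =>
    have hquot : ∀ d ∈ n.divisors, ((n / d : ℕ) : ℝ) ^ s = (n : ℝ) ^ s * (d : ℝ) ^ (-s) := by
      intro d hd
      rw [Nat.mem_divisors] at hd
      rw [Nat.cast_div_charZero hd.1, Real.div_rpow n.cast_nonneg d.cast_nonneg,
        Real.rpow_neg d.cast_nonneg, div_eq_mul_inv]
    calc (Hkfac (k + 2) n : ℝ)
        ≤ ∑ d ∈ n.divisors with 2 ≤ d, (Hkfac (k + 1) (n / d) : ℝ) := by
          exact_mod_cast Hkfac_succ_le_sum _ _
      _ ≤ ∑ d ∈ n.divisors with 2 ≤ d, C ^ k * (n : ℝ) ^ s / 2 ^ s * (d : ℝ) ^ (-s) := by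
          refine Finset.sum_le_sum fun d hd => (ih _).trans_eq ?_
          rw [hquot d (Finset.mem_filter.mp hd).1]
          ring
      _ = C ^ k * (n : ℝ) ^ s / 2 ^ s * ∑ d ∈ n.divisors with 2 ≤ d, (d : ℝ) ^ (-s) :=
          (Finset.mul_sum _ _ _).symm
      _ ≤ C ^ k * (n : ℝ) ^ s / 2 ^ s * C := by
          refine mul_le_mul_of_nonneg_left (sum_rpow_neg_le_tsum_sub_one hs ?_) (by positivity)
          simp
      _ = C ^ (k + 1) * (n : ℝ) ^ s / 2 ^ s := by ring

theorem stmt4 (s : ℝ) (hs : 1 < s) :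
    ∀ n : ℕ, 2 ≤ n → ∀ k : ℕ, 1 ≤ k →
      (Hkfac k n : ℝ) ≤
        ((∑' m : ℕ, (m : ℝ) ^ (-s)) - 1) ^ (k - 1) * (n : ℝ) ^ s / (2 : ℝ) ^ s := by
  intro n _ k hk
  obtain ⟨j, rfl⟩ := Nat.exists_eq_add_of_le' hk
  exact Hkfac_succ_le hs j n
end

section
/- Let f : ℕ → ℝ be an arithmetic function with f(1) = 1 whose absolute value is submultiplicative, i.e., |f(m)|·|f(n)| ≥ |f(mn)| for all m, n ∈ ℕ. Assume there exist C > 0 and γ ∈ ℝ such that |f(n)| ≤ C n^γ for all n ≥ 2. Then for all n ≥ 2, the Dirichlet inverse satisfies |f⁻¹(n)| ≤ H(n) · C^{Ω(n)} · n^γ ≤ C^{Ω(n)} · n^{γ+ρ}, where ρ > 1 is the real number satisfying ζ(ρ) = 2 (ρ = 1.72865…). -/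
/-- `Hfac n` is the number of ordered factorizations of `n`, i.e. the number of finite
sequences `(d_1, …, d_k)` with each `d_i ≥ 2` and product `n`. -/
noncomputable def Hfac (n : ℕ) : ℕ :=
  Nat.card {l : List ℕ // (∀ d ∈ l, 2 ≤ d) ∧ l.prod = n}

/-!
Deleting the first factor of an ordered factorization gives
`H(n) = ∑_{d ∣ n, d < n} H(d)`, and the defining identity of the inverse gives
`g(n) = -∑_{d ∣ n, d < n} f(n/d) g(d)`. Submultiplicativity bounds `|f(m)|` by the completely
multiplicative weight `w(m) = C^Ω(m) m^γ`, so strong induction along both recursions yields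
`|g(n)| ≤ H(n) w(n)`. If `∑ m^(-ρ) = 2`, the same induction gives
`H(n) ≤ ∑_{d ∣ n, d < n} d^ρ = n^ρ ∑_{e ∣ n, e > 1} e^(-ρ) ≤ n^ρ (ζ(ρ) - 1) = n^ρ`.
-/

lemma Nat.two_le_div_of_mem_properDivisors {n d : ℕ} (hd : d ∈ n.properDivisors) :
    2 ≤ n / d := by
  obtain ⟨⟨k, rfl⟩, hlt⟩ := Nat.mem_properDivisors.mp hd
  have hd0 : 0 < d := Nat.pos_of_mem_properDivisors hd
  rw [Nat.mul_div_cancel_left k hd0]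
  by_contra! hk
  interval_cases k <;> simp at hlt

abbrev OrderedFactorization (n : ℕ) : Type :=
  {l : List ℕ // (∀ d ∈ l, 2 ≤ d) ∧ l.prod = n}

namespace OrderedFactorization

lemma eq_nil_of_prod_eq_one {l : List ℕ} (hl : ∀ d ∈ l, 2 ≤ d) (h : l.prod = 1) : l = [] := by
  cases l with
  | nil => rfl
  | cons a t =>
    have : a = 1 := Nat.eq_one_of_mul_eq_one_right (by simpa using h)
    have := hl a List.mem_cons_self
    omega

instance : IsEmpty (OrderedFactorization 0) :=
  ⟨fun ⟨l, hl, h⟩ => by have := hl 0 (List.prod_eq_zero_iff.mp h); omega⟩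

instance : Unique (OrderedFactorization 1) where
  default := ⟨[], by simp⟩
  uniq := fun ⟨l, hl, h⟩ => Subtype.ext (eq_nil_of_prod_eq_one hl h)

lemma tail_prod_mem_properDivisors {n : ℕ} (hn : 2 ≤ n) (x : OrderedFactorization n) :
    x.1.tail.prod ∈ n.properDivisors := by
  obtain ⟨_ | ⟨a, t⟩, hx, rfl⟩ := x
  · simp at hn
  · have ha := hx a List.mem_cons_self
    have ht : t.prod ≠ 0 := by rintro h; simp [h] at hn
    simp only [List.tail_cons, List.prod_cons, Nat.mem_properDivisors, dvd_mul_left, true_and]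
    nlinarith [Nat.pos_of_ne_zero ht]

def sigmaEquiv {n : ℕ} (hn : 2 ≤ n) :
    (Σ d : n.properDivisors, OrderedFactorization d) ≃ OrderedFactorization n where
  toFun y := ⟨n / y.1 :: y.2.1,
    List.forall_mem_cons.2 ⟨Nat.two_le_div_of_mem_properDivisors y.1.2, y.2.2.1⟩,
    by rw [List.prod_cons, y.2.2.2, Nat.div_mul_cancel (Nat.mem_properDivisors.mp y.1.2).1]⟩
  invFun x := ⟨⟨x.1.tail.prod, tail_prod_mem_properDivisors hn x⟩,
    ⟨x.1.tail, fun _ hd => x.2.1 _ (List.mem_of_mem_tail hd), rfl⟩⟩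
  left_inv y := Sigma.subtype_ext (Subtype.ext y.2.2.2) rfl
  right_inv := by
    rintro ⟨_ | ⟨a, t⟩, hx, rfl⟩
    · simp at hn
    · have ht : 0 < t.prod := Nat.pos_of_ne_zero (by rintro h; simp [h] at hn)
      simp [Nat.mul_div_cancel _ ht]

instance finite (n : ℕ) : Finite (OrderedFactorization n) := by
  induction n using Nat.strong_induction_on with
  | _ n ih =>
    match n, ih with
    | 0, _ => infer_instance
    | 1, _ => infer_instance
    | n + 2, ih =>
      have (d : (n + 2).properDivisors) : Finite (OrderedFactorization d) :=
        ih d (Nat.mem_properDivisors.mp d.2).2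
      exact .of_equiv _ (sigmaEquiv (by omega))

end OrderedFactorization

lemma Hfac_one : Hfac 1 = 1 := Nat.card_unique

lemma Hfac_eq_sum_properDivisors {n : ℕ} (hn : 2 ≤ n) :
    Hfac n = ∑ d ∈ n.properDivisors, Hfac d := by
  rw [Hfac, ← Nat.card_congr (OrderedFactorization.sigmaEquiv hn), Nat.card_sigma,
    ← Finset.sum_coe_sort n.properDivisors]
  rfl

noncomputable def primeWeight (C γ : ℝ) (n : ℕ) : ℝ :=
  C ^ n.primeFactorsList.length * (n : ℝ) ^ γ

lemma primeWeight_one (C γ : ℝ) : primeWeight C γ 1 = 1 := by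
  simp [primeWeight]

lemma primeWeight_prime (C γ : ℝ) {p : ℕ} (hp : p.Prime) :
    primeWeight C γ p = C * (p : ℝ) ^ γ := by
  simp [primeWeight, Nat.primeFactorsList_prime hp]

lemma primeWeight_mul (C γ : ℝ) {a b : ℕ} (ha : a ≠ 0) (hb : b ≠ 0) :
    primeWeight C γ (a * b) = primeWeight C γ a * primeWeight C γ b := by
  simp only [primeWeight, ← ArithmeticFunction.cardFactors_apply,
    ArithmeticFunction.cardFactors_mul ha hb, Nat.cast_mul,
    Real.mul_rpow (Nat.cast_nonneg a) (Nat.cast_nonneg b), pow_add]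
  ring

lemma abs_le_of_submultiplicative {f w : ℕ → ℝ}
    (hsub : ∀ m n : ℕ, 0 < m → 0 < n → |f (m * n)| ≤ |f m| * |f n|)
    (hw : ∀ m n : ℕ, m ≠ 0 → n ≠ 0 → w (m * n) = w m * w n)
    (h1 : |f 1| ≤ w 1) (hprime : ∀ p : ℕ, p.Prime → |f p| ≤ w p) :
    ∀ n : ℕ, n ≠ 0 → |f n| ≤ w n := by
  intro n
  induction n using Nat.recOnMul with
  | zero => simp
  | one => exact fun _ => h1
  | prime p hp => exact fun _ => hprime p hp
  | mul a b iha ihb =>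
    intro hab
    have ha : a ≠ 0 := left_ne_zero_of_mul hab
    have hb : b ≠ 0 := right_ne_zero_of_mul hab
    calc |f (a * b)| ≤ |f a| * |f b| := hsub a b ha.bot_lt hb.bot_lt
      _ ≤ w a * w b :=
          mul_le_mul (iha ha) (ihb hb) (abs_nonneg _) ((abs_nonneg _).trans (iha ha))
      _ = w (a * b) := (hw a b ha hb).symm

def IsDirichletInverse (f g : ℕ → ℝ) : Prop :=
  ∀ n : ℕ, 0 < n → ∑ d ∈ n.divisors, f (n / d) * g d = if n = 1 then 1 else 0

namespace IsDirichletInverse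

variable {f g : ℕ → ℝ}

lemma apply_one (hginv : IsDirichletInverse f g) (hf1 : f 1 = 1) : g 1 = 1 := by
  simpa [hf1] using hginv 1 one_pos

lemma eq_neg_sum_properDivisors (hginv : IsDirichletInverse f g) (hf1 : f 1 = 1) {n : ℕ}
    (hn : 2 ≤ n) :
    g n = -∑ d ∈ n.properDivisors, f (n / d) * g d := by
  have h := hginv n (by omega)
  rw [if_neg (by omega), ← Nat.cons_self_properDivisors (by omega : n ≠ 0), Finset.sum_cons,
    Nat.div_self (by omega), hf1, one_mul] at h
  linarith

lemma abs_le_Hfac_mul (hginv : IsDirichletInverse f g) (hf1 : f 1 = 1) {w : ℕ → ℝ}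
    (hw1 : w 1 = 1) (hw : ∀ m n : ℕ, m ≠ 0 → n ≠ 0 → w (m * n) = w m * w n)
    (hfw : ∀ n : ℕ, 2 ≤ n → |f n| ≤ w n) :
    ∀ n : ℕ, 0 < n → |g n| ≤ Hfac n * w n := by
  intro n
  induction n using Nat.strong_induction_on with
  | _ n ih =>
    intro hn
    obtain rfl | hn2 : n = 1 ∨ 2 ≤ n := by omega
    · simp [hginv.apply_one hf1, Hfac_one, hw1]
    have hterm : ∀ d ∈ n.properDivisors, |f (n / d) * g d| ≤ Hfac d * w n := by
      intro d hd
      obtain ⟨⟨e, rfl⟩, hlt⟩ := Nat.mem_properDivisors.mp hd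
      have hd0 : 0 < d := Nat.pos_of_mem_properDivisors hd
      have he2 : 2 ≤ e := by simpa [hd0] using Nat.two_le_div_of_mem_properDivisors hd
      rw [Nat.mul_div_cancel_left e hd0, abs_mul, mul_comm d e, hw e d (by omega) hd0.ne']
      calc |f e| * |g d| ≤ w e * (Hfac d * w d) :=
            mul_le_mul (hfw e he2) (ih d hlt hd0) (abs_nonneg _) ((abs_nonneg _).trans (hfw e he2))
        _ = Hfac d * (w e * w d) := by ring
    calc |g n| ≤ ∑ d ∈ n.properDivisors, |f (n / d) * g d| := by
          rw [hginv.eq_neg_sum_properDivisors hf1 hn2, abs_neg]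
          exact Finset.abs_sum_le_sum_abs _ _
      _ ≤ ∑ d ∈ n.properDivisors, (Hfac d : ℝ) * w n := Finset.sum_le_sum hterm
      _ = Hfac n * w n := by
          rw [← Finset.sum_mul, Hfac_eq_sum_properDivisors hn2, Nat.cast_sum]

end IsDirichletInverse

lemma rpow_eq_rpow_mul_div_rpow_neg {n d : ℕ} (hd : d ∣ n) (hn : n ≠ 0) (ρ : ℝ) :
    (d : ℝ) ^ ρ = (n : ℝ) ^ ρ * ((n / d : ℕ) : ℝ) ^ (-ρ) := by
  obtain ⟨e, rfl⟩ := hd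
  have hd0 : 0 < d := Nat.pos_of_ne_zero (left_ne_zero_of_mul hn)
  have he0 : (0 : ℝ) < e := by exact_mod_cast Nat.pos_of_ne_zero (right_ne_zero_of_mul hn)
  rw [Nat.mul_div_cancel_left e hd0, Nat.cast_mul, Real.mul_rpow (Nat.cast_nonneg _) he0.le,
    Real.rpow_neg he0.le, mul_assoc, mul_inv_cancel₀ (Real.rpow_pos_of_pos he0 ρ).ne', mul_one]

lemma Hfac_le_rpow {ρ : ℝ} (hzeta : ∑' m : ℕ, (m : ℝ) ^ (-ρ) = 2) :
    ∀ n : ℕ, 0 < n → (Hfac n : ℝ) ≤ (n : ℝ) ^ ρ := by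
  have hsum : Summable fun m : ℕ => (m : ℝ) ^ (-ρ) := by
    by_contra h
    rw [tsum_eq_zero_of_not_summable h] at hzeta
    norm_num at hzeta
  intro n
  induction n using Nat.strong_induction_on with
  | _ n ih =>
    intro hn
    obtain rfl | hn2 : n = 1 ∨ 2 ≤ n := by omega
    · simp [Hfac_one]
    have hdiv : ∑ d ∈ n.properDivisors, ((n / d : ℕ) : ℝ) ^ (-ρ) + 1 ≤ 2 := by
      have hsplit : ∑ d ∈ n.properDivisors, ((n / d : ℕ) : ℝ) ^ (-ρ) + 1 =
          ∑ d ∈ n.divisors, ((n / d : ℕ) : ℝ) ^ (-ρ) := by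
        rw [← Nat.cons_self_properDivisors hn.ne', Finset.sum_cons, Nat.div_self hn, add_comm]
        simp
      rw [hsplit, Nat.sum_div_divisors n fun m => (m : ℝ) ^ (-ρ), ← hzeta]
      exact hsum.sum_le_tsum _ fun m _ => Real.rpow_nonneg (Nat.cast_nonneg m) _
    calc (Hfac n : ℝ) = ∑ d ∈ n.properDivisors, (Hfac d : ℝ) := by
          rw [Hfac_eq_sum_properDivisors hn2, Nat.cast_sum]
      _ ≤ ∑ d ∈ n.properDivisors, (d : ℝ) ^ ρ := Finset.sum_le_sum fun d hd =>
          ih d (Nat.mem_properDivisors.mp hd).2 (Nat.pos_of_mem_properDivisors hd)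
      _ = (n : ℝ) ^ ρ * ∑ d ∈ n.properDivisors, ((n / d : ℕ) : ℝ) ^ (-ρ) := by
          rw [Finset.mul_sum]
          exact Finset.sum_congr rfl fun d hd =>
            rpow_eq_rpow_mul_div_rpow_neg (Nat.mem_properDivisors.mp hd).1 hn.ne' ρ
      _ ≤ (n : ℝ) ^ ρ * 1 := by gcongr; linarith
      _ = (n : ℝ) ^ ρ := mul_one _

theorem stmt6_general (f g : ℕ → ℝ) (hf1 : f 1 = 1)
    (hginv : ∀ n : ℕ, 0 < n →
      ∑ d ∈ n.divisors, f (n / d) * g d = if n = 1 then 1 else 0)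
    (hsub : ∀ m n : ℕ, 0 < m → 0 < n → |f (m * n)| ≤ |f m| * |f n|)
    (C : ℝ) (hC : 0 < C) (γ : ℝ)
    (hf : ∀ n : ℕ, 2 ≤ n → |f n| ≤ C * (n : ℝ) ^ γ)
    (ρ : ℝ) (hzeta : ∑' m : ℕ, (m : ℝ) ^ (-ρ) = 2) :
    ∀ n : ℕ, 2 ≤ n →
      |g n| ≤ (Hfac n : ℝ) * C ^ n.primeFactorsList.length * (n : ℝ) ^ γ ∧
      (Hfac n : ℝ) * C ^ n.primeFactorsList.length * (n : ℝ) ^ γ ≤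
        C ^ n.primeFactorsList.length * (n : ℝ) ^ (γ + ρ) := by
  intro n hn
  have hfw : ∀ m : ℕ, m ≠ 0 → |f m| ≤ primeWeight C γ m :=
    abs_le_of_submultiplicative hsub (fun _ _ => primeWeight_mul C γ)
      (by rw [hf1, primeWeight_one, abs_one])
      (fun p hp => (primeWeight_prime C γ hp).symm ▸ hf p hp.two_le)
  have hg := IsDirichletInverse.abs_le_Hfac_mul hginv hf1 (primeWeight_one C γ)
    (fun _ _ => primeWeight_mul C γ) (fun m hm => hfw m (by omega)) n (by omega)
  have hH := Hfac_le_rpow hzeta n (by omega)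
  simp only [primeWeight, ← mul_assoc] at hg
  refine ⟨hg, ?_⟩
  rw [Real.rpow_add (by positivity)]
  calc (Hfac n : ℝ) * C ^ n.primeFactorsList.length * (n : ℝ) ^ γ
      = C ^ n.primeFactorsList.length * (n : ℝ) ^ γ * Hfac n := by ring
    _ ≤ C ^ n.primeFactorsList.length * (n : ℝ) ^ γ * (n : ℝ) ^ ρ := by gcongr
    _ = C ^ n.primeFactorsList.length * ((n : ℝ) ^ γ * (n : ℝ) ^ ρ) := by ring

theorem stmt6 (f g : ℕ → ℝ) (hf1 : f 1 = 1)
    (hginv : ∀ n : ℕ, 0 < n →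
      ∑ d ∈ n.divisors, f (n / d) * g d = if n = 1 then 1 else 0)
    (hsub : ∀ m n : ℕ, 0 < m → 0 < n → |f (m * n)| ≤ |f m| * |f n|)
    (C : ℝ) (hC : 0 < C) (γ : ℝ)
    (hf : ∀ n : ℕ, 2 ≤ n → |f n| ≤ C * (n : ℝ) ^ γ)
    (ρ : ℝ) (hρ : 1 < ρ) (hzeta : ∑' m : ℕ, (m : ℝ) ^ (-ρ) = 2) :
    ∀ n : ℕ, 2 ≤ n →
      |g n| ≤ (Hfac n : ℝ) * C ^ n.primeFactorsList.length * (n : ℝ) ^ γ ∧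
      (Hfac n : ℝ) * C ^ n.primeFactorsList.length * (n : ℝ) ^ γ ≤
        C ^ n.primeFactorsList.length * (n : ℝ) ^ (γ + ρ) :=
  stmt6_general f g hf1 hginv hsub C hC γ hf ρ hzeta
end

section
/- Let f : ℕ → ℝ be a multiplicative arithmetic function with f(1) = 1 such that f(p^k) = 0 for all primes p and all integers k ≥ 2. Assume there exist C > 0 and γ ∈ ℝ such that |f(n)| ≤ C n^γ for all n ≥ 2. Then for all n ≥ 2, the Dirichlet inverse satisfies |f⁻¹(n)| ≤ C^{Ω(n)} · n^γ. -/
/-!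
The Dirichlet inverse of `f` is the completely multiplicative function `h` with `h(p) = -f(p)`:
both `f` and `f * h` are multiplicative, and on a prime power only the terms `d = 1` and `d = p` of
`∑_{d ∣ p^k} f(d) h(p^k / d)` survive, where they cancel. Hence `|f⁻¹(n)| = ∏_{p ∣ n} |f(p)|^{v_p(n)}`,
and bounding each factor by `C p^γ` gives `C^{Ω(n)} n^γ`.
-/

namespace ArithmeticFunction

variable {R : Type*}

def ofFun [Zero R] (f : ℕ → R) : ArithmeticFunction R :=
  ⟨fun n => if n = 0 then 0 else f n, if_pos rfl⟩

theorem ofFun_apply [Zero R] (f : ℕ → R) {n : ℕ} (hn : n ≠ 0) : ofFun f n = f n :=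
  if_neg hn

theorem ofFun_mul_ofFun_apply [Semiring R] (f g : ℕ → R) (n : ℕ) :
    (ofFun f * ofFun g) n = ∑ d ∈ n.divisors, f (n / d) * g d := by
  rw [mul_apply, Nat.sum_divisorsAntidiagonal' (fun x y => ofFun f x * ofFun g y)]
  refine Finset.sum_congr rfl fun d hd => ?_
  have hd0 : d ≠ 0 := Nat.ne_of_gt (Nat.pos_of_mem_divisors hd)
  have hnd0 : n / d ≠ 0 :=
    Nat.ne_of_gt (Nat.div_pos (Nat.divisor_le hd) (Nat.pos_of_ne_zero hd0))
  rw [ofFun_apply f hnd0, ofFun_apply g hd0]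

theorem ofFun_mul_ofFun_eq_one [Semiring R] {f g : ℕ → R}
    (h : ∀ n : ℕ, 0 < n → ∑ d ∈ n.divisors, f (n / d) * g d = if n = 1 then 1 else 0) :
    ofFun f * ofFun g = 1 := by
  ext n
  rcases eq_or_ne n 0 with rfl | hn
  · simp
  · rw [ofFun_mul_ofFun_apply, h n (Nat.pos_of_ne_zero hn), one_apply]

theorem isMultiplicative_ofFun [MonoidWithZero R] {f : ℕ → R} (hf1 : f 1 = 1)
    (hmul : ∀ m n : ℕ, 0 < m → 0 < n → m.Coprime n → f (m * n) = f m * f n) :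
    (ofFun f).IsMultiplicative := by
  refine ⟨by rw [ofFun_apply f one_ne_zero, hf1], fun {m n} hmn => ?_⟩
  rcases eq_or_ne m 0 with rfl | hm
  · simp
  rcases eq_or_ne n 0 with rfl | hn
  · simp
  rw [ofFun_apply f (mul_ne_zero hm hn), ofFun_apply f hm, ofFun_apply f hn]
  exact hmul m n (Nat.pos_of_ne_zero hm) (Nat.pos_of_ne_zero hn) hmn

theorem mul_apply_prime_pow [Semiring R] (F G : ArithmeticFunction R) {p : ℕ} (hp : p.Prime)
    (k : ℕ) : (F * G) (p ^ k) = ∑ i ∈ Finset.range (k + 1), F (p ^ i) * G (p ^ (k - i)) := by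
  rw [mul_apply, Nat.sum_divisorsAntidiagonal (fun x y => F x * G y),
    Nat.sum_divisors_prime_pow hp]
  refine Finset.sum_congr rfl fun i hi => ?_
  rw [Nat.pow_div (Nat.lt_succ_iff.mp (Finset.mem_range.mp hi)) hp.pos]

def ofPrimeValues [CommMonoidWithZero R] (a : ℕ → R) : ArithmeticFunction R :=
  ofFun fun n => (n.primeFactorsList.map a).prod

section ofPrimeValues

variable [CommMonoidWithZero R] (a : ℕ → R)

theorem ofPrimeValues_apply {n : ℕ} (hn : n ≠ 0) :
    ofPrimeValues a n = (n.primeFactorsList.map a).prod :=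
  ofFun_apply _ hn

theorem ofPrimeValues_mul {m n : ℕ} (hm : m ≠ 0) (hn : n ≠ 0) :
    ofPrimeValues a (m * n) = ofPrimeValues a m * ofPrimeValues a n := by
  rw [ofPrimeValues_apply a (mul_ne_zero hm hn), ofPrimeValues_apply a hm,
    ofPrimeValues_apply a hn, ((Nat.perm_primeFactorsList_mul hm hn).map a).prod_eq,
    List.map_append, List.prod_append]

theorem isMultiplicative_ofPrimeValues : (ofPrimeValues a).IsMultiplicative := by
  refine ⟨by simp [ofPrimeValues_apply], fun {m n} hmn => ?_⟩
  rcases eq_or_ne m 0 with rfl | hm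
  · simp
  rcases eq_or_ne n 0 with rfl | hn
  · simp
  exact ofPrimeValues_mul a hm hn

theorem ofPrimeValues_prime_pow {p : ℕ} (hp : p.Prime) (k : ℕ) :
    ofPrimeValues a (p ^ k) = a p ^ k := by
  rw [ofPrimeValues_apply a (pow_ne_zero k hp.ne_zero), hp.primeFactorsList_pow,
    List.map_replicate, List.prod_replicate]

end ofPrimeValues

theorem mul_ofPrimeValues_neg_eq_one [CommRing R] {F : ArithmeticFunction R}
    (hF : F.IsMultiplicative) (hsq : ∀ p k : ℕ, p.Prime → 2 ≤ k → F (p ^ k) = 0) :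
    F * ofPrimeValues (fun p => -F p) = 1 := by
  rw [IsMultiplicative.eq_iff_eq_on_prime_powers _
    (hF.mul (isMultiplicative_ofPrimeValues _)) _ isMultiplicative_one]
  intro p k hp
  rw [mul_apply_prime_pow _ _ hp]
  simp only [ofPrimeValues_prime_pow _ hp]
  rcases k with _ | k
  · simp [hF.map_one]
  have hhigh : ∀ i ∈ Finset.range k, F (p ^ (i + 1 + 1)) * (-F p) ^ (k + 1 - (i + 1 + 1)) = 0 :=
    fun i _ => by rw [hsq p _ hp (by omega), zero_mul]
  rw [one_apply_ne (Nat.one_lt_pow (Nat.succ_ne_zero k) hp.one_lt).ne', Finset.sum_range_succ',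
    Finset.sum_range_succ', Finset.sum_eq_zero hhigh, Nat.sub_zero, zero_add, Nat.add_sub_cancel,
    pow_zero, pow_one, hF.map_one]
  ring

end ArithmeticFunction

open ArithmeticFunction

theorem List.abs_prod_map_le_pow_length_mul_rpow {a : ℕ → ℝ} {C γ : ℝ} :
    ∀ {l : List ℕ}, (∀ p ∈ l, |a p| ≤ C * (p : ℝ) ^ γ) →
      |(l.map a).prod| ≤ C ^ l.length * ((l.prod : ℕ) : ℝ) ^ γ
  | [], _ => by simp
  | p :: l, h => by
    have hp := h p List.mem_cons_self
    have hl := List.abs_prod_map_le_pow_length_mul_rpow fun q hq => h q (List.mem_cons_of_mem p hq)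
    rw [List.map_cons, List.prod_cons, abs_mul, List.prod_cons, Nat.cast_mul,
      Real.mul_rpow (Nat.cast_nonneg _) (Nat.cast_nonneg _), List.length_cons, pow_succ]
    calc |a p| * |(l.map a).prod|
        ≤ C * (p : ℝ) ^ γ * (C ^ l.length * ((l.prod : ℕ) : ℝ) ^ γ) :=
          mul_le_mul hp hl (abs_nonneg _) ((abs_nonneg _).trans hp)
      _ = _ := by ring

theorem ArithmeticFunction.abs_ofPrimeValues_le {a : ℕ → ℝ} {C γ : ℝ}
    (ha : ∀ p : ℕ, p.Prime → |a p| ≤ C * (p : ℝ) ^ γ) {n : ℕ} (hn : n ≠ 0) :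
    |ofPrimeValues a n| ≤ C ^ n.primeFactorsList.length * (n : ℝ) ^ γ := by
  rw [ofPrimeValues_apply a hn]
  have := List.abs_prod_map_le_pow_length_mul_rpow (l := n.primeFactorsList)
    fun p hp => ha p (Nat.prime_of_mem_primeFactorsList hp)
  rwa [Nat.prod_primeFactorsList hn] at this

theorem stmt9_general (f g : ℕ → ℝ) (hf1 : f 1 = 1)
    (hmult : ∀ m n : ℕ, 0 < m → 0 < n → Nat.Coprime m n → f (m * n) = f m * f n)
    (hzero : ∀ p k : ℕ, p.Prime → 2 ≤ k → f (p ^ k) = 0)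
    (hginv : ∀ n : ℕ, 0 < n →
      ∑ d ∈ n.divisors, f (n / d) * g d = if n = 1 then 1 else 0)
    (C : ℝ) (γ : ℝ)
    (hf : ∀ n : ℕ, 2 ≤ n → |f n| ≤ C * (n : ℝ) ^ γ) :
    ∀ n : ℕ, 2 ≤ n →
      |g n| ≤ C ^ n.primeFactorsList.length * (n : ℝ) ^ γ := by
  intro n hn
  have hn0 : n ≠ 0 := by omega
  have hF := isMultiplicative_ofFun hf1 hmult
  have hinv : ofFun f * ofPrimeValues (fun p => -ofFun f p) = 1 :=
    mul_ofPrimeValues_neg_eq_one hF fun p k hp hk => by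
      rw [ofFun_apply f (pow_ne_zero k hp.ne_zero), hzero p k hp hk]
  have hg : ofFun g = ofPrimeValues (fun p => -ofFun f p) :=
    left_inv_eq_right_inv (by rw [mul_comm, ofFun_mul_ofFun_eq_one hginv]) hinv
  rw [← ofFun_apply g hn0, hg]
  refine abs_ofPrimeValues_le (fun p hp => ?_) hn0
  rw [abs_neg, ofFun_apply f hp.ne_zero]
  exact hf p hp.two_le

theorem stmt9 (f g : ℕ → ℝ) (hf1 : f 1 = 1)
    (hmult : ∀ m n : ℕ, 0 < m → 0 < n → Nat.Coprime m n → f (m * n) = f m * f n)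
    (hzero : ∀ p k : ℕ, p.Prime → 2 ≤ k → f (p ^ k) = 0)
    (hginv : ∀ n : ℕ, 0 < n →
      ∑ d ∈ n.divisors, f (n / d) * g d = if n = 1 then 1 else 0)
    (C : ℝ) (hC : 0 < C) (γ : ℝ)
    (hf : ∀ n : ℕ, 2 ≤ n → |f n| ≤ C * (n : ℝ) ^ γ) :
    ∀ n : ℕ, 2 ≤ n →
      |g n| ≤ C ^ n.primeFactorsList.length * (n : ℝ) ^ γ :=
  stmt9_general f g hf1 hmult hzero hginv C γ hf
end
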